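/- For d = 1 and any ε > 0, the integral ∫_0^ε r^{−1} dr diverges; consequently, in dimension d = 1, the lower bound ‖ρ*g‖_{L^2_{x,v}}^2 ≳ ∫_{0<r≲1} r^{d−2} dr = ∞ holds for any nonzero nonnegative g ∈ 𝒮(ℝ × ℝ) with nonnegative ĝ ∈ C_c^∞, showing the failure of the estimate ‖ρ*g‖_{L^2_{x,v}} ≲ ‖g‖_{L^2_t L^1_x}. -/

import Mathlib

open MeasureTheory ENNReal

/-- The space-time Fourier transform on `ℝ × ℝ` (time × one space dimension). -/
noncomputable def spaceTimeFourier (g : ℝ × ℝ → ℝ) (p : ℝ × ℝ) : ℂ :=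
  ∫ z : ℝ × ℝ, (g z : ℂ) * Complex.exp (-Complex.I * (z.1 * p.1 + z.2 * p.2))


/-- `∫_M^∞ u⁻¹ du = ∞`. -/
lemma lint_Ici_inv_top {M : ℝ} (hM : 0 < M) :
    (∫⁻ u in Set.Ici M, ENNReal.ofReal u⁻¹) = ∞ := by
  by_contra h
  apply not_IntegrableOn_Ici_inv (a := M)
  refine ⟨measurable_inv.aestronglyMeasurable.restrict, ?_⟩
  refine (hasFiniteIntegral_iff_ofReal ?_).2 (lt_top_iff_ne_top.2 h)
  exact (ae_restrict_iff' measurableSet_Ici).2 (ae_of_all _ fun u hu =>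
    inv_nonneg.2 (hM.le.trans hu))

lemma lint_Ioc_inv_top {ε : ℝ} (hε : 0 < ε) :
    (∫⁻ r in Set.Ioc (0 : ℝ) ε, (ENNReal.ofReal r)⁻¹) = ∞ := by
  have hcg : (∫⁻ r in Set.Ioc (0 : ℝ) ε, (ENNReal.ofReal r)⁻¹)
      = ∫⁻ r in Set.Ioc (0 : ℝ) ε, ENNReal.ofReal r⁻¹ :=
    setLIntegral_congr_fun measurableSet_Ioc (fun r hr => by
      rw [ENNReal.ofReal_inv_of_pos hr.1])
  rw [hcg]
  by_contra h
  have hint : IntegrableOn (fun r : ℝ => r⁻¹) (Set.Ioc (0 : ℝ) ε) := by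
    refine ⟨measurable_inv.aestronglyMeasurable.restrict, ?_⟩
    refine (hasFiniteIntegral_iff_ofReal ?_).2 (lt_top_iff_ne_top.2 h)
    exact (ae_restrict_iff' measurableSet_Ioc).2 (ae_of_all _ fun u hu =>
      inv_nonneg.2 hu.1.le)
  have hint2 : IntegrableOn (fun x : ℝ => x ^ (-1 : ℝ)) (Set.Ioo (0 : ℝ) ε) := by
    refine (hint.mono_set Set.Ioo_subset_Ioc_self).congr_fun ?_ measurableSet_Ioo
    intro x _
    exact (Real.rpow_neg_one x).symm
  have := (intervalIntegral.integrableOn_Ioo_rpow_iff hε).1 hint2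
  norm_num at this

/-- change of variables `x ↦ y₀ - x` plus divergence. -/
lemma lint_shift_inv (y₀ M : ℝ) (hM : 0 < M) :
    (∫⁻ x in Set.Iic (y₀ - M), ENNReal.ofReal ((y₀ - x)⁻¹)) = ∞ := by
  have he : MeasurableEmbedding (fun x : ℝ => y₀ - x) := by
    have h : (fun x : ℝ => y₀ - x) = (fun x : ℝ => y₀ + x) ∘ (fun x : ℝ => -x) := by
      funext x; simp [sub_eq_add_neg]
    rw [h]
    exact ((Homeomorph.addLeft y₀).measurableEmbedding).comp
      (Homeomorph.neg ℝ).measurableEmbedding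
  have hpre : (fun x : ℝ => y₀ - x) ⁻¹' Set.Ici M = Set.Iic (y₀ - M) := by
    ext x; simp only [Set.mem_preimage, Set.mem_Ici, Set.mem_Iic]
    constructor <;> intro <;> linarith
  have key : (∫⁻ x in Set.Iic (y₀ - M), ENNReal.ofReal ((y₀ - x)⁻¹))
      = ∫⁻ u in Set.Ici M, ENNReal.ofReal u⁻¹ := by
    calc (∫⁻ x in Set.Iic (y₀ - M), ENNReal.ofReal ((y₀ - x)⁻¹))
        = ∫⁻ u, ENNReal.ofReal u⁻¹ ∂(Measure.map (fun x : ℝ => y₀ - x)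
            (volume.restrict ((fun x : ℝ => y₀ - x) ⁻¹' Set.Ici M))) := by
          rw [hpre]
          exact (he.lintegral_map (fun u => ENNReal.ofReal u⁻¹)).symm
      _ = ∫⁻ u, ENNReal.ofReal u⁻¹
            ∂((Measure.map (fun x : ℝ => y₀ - x) volume).restrict (Set.Ici M)) := by
          rw [Measure.restrict_map he.measurable measurableSet_Ici]
      _ = ∫⁻ u in Set.Ici M, ENNReal.ofReal u⁻¹ := by
          rw [Measure.map_sub_left_eq_self volume y₀]
  rw [key]
  exact lint_Ici_inv_top hM

lemma lintegral_comp_neg (f : ℝ → ℝ≥0∞) : (∫⁻ t, f (-t)) = ∫⁻ t, f t := by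
  have he : MeasurableEmbedding (fun t : ℝ => -t) := (Homeomorph.neg ℝ).measurableEmbedding
  conv_rhs => rw [← Measure.map_neg_eq_self (volume : Measure ℝ)]
  exact (he.lintegral_map f).symm

set_option maxHeartbeats 1000000 in
/-- key divergence lemma -/
lemma key_lemma (g : ℝ × ℝ → ℝ) (hpos : ∀ z, 0 ≤ g z)
    (a b c η y₀ : ℝ) (ha : 0 < a) (hab : a < b) (hc : 0 < c) (hη : 0 < η)
    (hge : ∀ t y, t ∈ Set.Icc a b → |y - y₀| ≤ η → c ≤ g (t, y)) :
    (∫⁻ x : ℝ, ∫⁻ v : ℝ, (∫⁻ t : ℝ, ENNReal.ofReal (g (t, x + t * v))) ^ (2 : ℝ)) = ∞ := by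
  have hb : 0 < b := ha.trans hab
  have hba : 0 < b - a := sub_pos.2 hab
  have hab' : 0 < a + b := by linarith
  set M : ℝ := 2 * η * b / (b - a) + b + 1 with hMdef
  have hM0 : 0 < M := by positivity
  have hM1 : 2 * η * b ≤ M * (b - a) := by
    have h1 : 2 * η * b / (b - a) * (b - a) = 2 * η * b := div_mul_cancel₀ _ hba.ne'
    rw [hMdef]
    nlinarith [mul_pos (show (0:ℝ) < b + 1 by linarith) hba]
  set L : ℝ := (c * (η * (a + b)) / 2) ^ 2 * ((b - a) / (b * (a + b))) with hLdef
  have hL : 0 < L := by positivity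
  -- pointwise bound
  have main : ∀ x : ℝ, x ≤ y₀ - M →
      ENNReal.ofReal L * ENNReal.ofReal ((y₀ - x)⁻¹)
        ≤ ∫⁻ v : ℝ, (∫⁻ t : ℝ, ENNReal.ofReal (g (t, x + t * v))) ^ (2 : ℝ) := by
    intro x hx
    set u : ℝ := y₀ - x with hudef
    have hu : M ≤ u := by rw [hudef]; linarith
    have hu0 : 0 < u := hM0.trans_le hu
    set Q : ℝ := c * (η * (a + b) / (2 * u)) with hQdef
    have hQ0 : 0 < Q := by positivity
    have step1 : ∀ v ∈ Set.Icc (u / b) (2 * u / (a + b)),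
        ENNReal.ofReal Q ≤ ∫⁻ t : ℝ, ENNReal.ofReal (g (t, x + t * v)) := by
      intro v hv
      have hv0 : 0 < v := lt_of_lt_of_le (div_pos hu0 hb) hv.1
      have hvb : u ≤ v * b := by
        have := (div_le_iff₀ hb).1 hv.1; linarith
      have hvab : v * (a + b) ≤ 2 * u := by
        have := (le_div_iff₀ hab').1 hv.2; linarith
      have hvη : 2 * η ≤ v * (b - a) := by
        nlinarith [mul_le_mul_of_nonneg_right hvb hba.le,
          mul_le_mul_of_nonneg_right hu hba.le]
      have hsq : ∀ t ∈ Set.Icc (u / v - η / v) (u / v), c ≤ g (t, x + t * v) := by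
        intro t ht
        have htv_le : t * v ≤ u := by
          have h2 := mul_le_mul_of_nonneg_right ht.2 hv0.le
          rwa [div_mul_cancel₀ _ hv0.ne'] at h2
        have htv_ge : u - η ≤ t * v := by
          have h1 := mul_le_mul_of_nonneg_right ht.1 hv0.le
          rwa [sub_mul, div_mul_cancel₀ _ hv0.ne', div_mul_cancel₀ _ hv0.ne'] at h1
        refine hge t (x + t * v) ⟨?_, ?_⟩ ?_
        · -- a ≤ t
          have h2 : (a + b) / 2 ≤ u / v := by
            rw [le_div_iff₀ hv0]; nlinarith
          have h3 : η / v ≤ (b - a) / 2 := by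
            rw [div_le_div_iff₀ hv0 (by norm_num : (0:ℝ) < 2)]; nlinarith
          linarith [ht.1]
        · -- t ≤ b
          have h2 : u / v ≤ b := (div_le_iff₀ hv0).2 (by nlinarith)
          linarith [ht.2]
        · -- |x + t*v - y₀| ≤ η
          have h4 : x + t * v - y₀ = t * v - u := by rw [hudef]; ring
          rw [h4, abs_le]
          constructor <;> linarith
      have hvolT : volume (Set.Icc (u / v - η / v) (u / v)) = ENNReal.ofReal (η / v) := by
        rw [Real.volume_Icc]; congr 1; ring
      calc ENNReal.ofReal Q
          ≤ ENNReal.ofReal (c * (η / v)) := by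
            apply ENNReal.ofReal_le_ofReal
            rw [hQdef]
            have h5 : η * (a + b) / (2 * u) ≤ η / v := by
              rw [div_le_div_iff₀ (by positivity) hv0]; nlinarith
            nlinarith
        _ = ENNReal.ofReal c * ENNReal.ofReal (η / v) := ENNReal.ofReal_mul hc.le
        _ = ∫⁻ _ in Set.Icc (u / v - η / v) (u / v), ENNReal.ofReal c := by
            rw [setLIntegral_const, hvolT]
        _ ≤ ∫⁻ t in Set.Icc (u / v - η / v) (u / v), ENNReal.ofReal (g (t, x + t * v)) :=
            setLIntegral_mono' measurableSet_Icc fun t ht =>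
              ENNReal.ofReal_le_ofReal (hsq t ht)
        _ ≤ ∫⁻ t : ℝ, ENNReal.ofReal (g (t, x + t * v)) := setLIntegral_le_lintegral _ _
    -- integrate over v
    have hvolI : volume (Set.Icc (u / b) (2 * u / (a + b)))
        = ENNReal.ofReal (2 * u / (a + b) - u / b) := Real.volume_Icc
    have hqrw : (ENNReal.ofReal Q) ^ (2 : ℝ) = ENNReal.ofReal (Q * Q) := by
      rw [show (2 : ℝ) = ((2 : ℕ) : ℝ) by norm_num, ENNReal.rpow_natCast, sq,
        ENNReal.ofReal_mul hQ0.le]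
    have hLrw : L * u⁻¹ ≤ Q * Q * (2 * u / (a + b) - u / b) := by
      apply le_of_eq
      rw [hLdef, hQdef]
      field_simp
      ring
    calc ENNReal.ofReal L * ENNReal.ofReal ((y₀ - x)⁻¹)
        = ENNReal.ofReal (L * u⁻¹) := by
          rw [← ENNReal.ofReal_mul hL.le]
      _ ≤ ENNReal.ofReal (Q * Q * (2 * u / (a + b) - u / b)) :=
          ENNReal.ofReal_le_ofReal hLrw
      _ = ENNReal.ofReal (Q * Q) * ENNReal.ofReal (2 * u / (a + b) - u / b) :=
          ENNReal.ofReal_mul (by positivity)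
      _ = (ENNReal.ofReal Q) ^ (2 : ℝ) * volume (Set.Icc (u / b) (2 * u / (a + b))) := by
          rw [hqrw, hvolI]
      _ = ∫⁻ _ in Set.Icc (u / b) (2 * u / (a + b)), (ENNReal.ofReal Q) ^ (2 : ℝ) :=
          (setLIntegral_const _ _).symm
      _ ≤ ∫⁻ v in Set.Icc (u / b) (2 * u / (a + b)),
            (∫⁻ t : ℝ, ENNReal.ofReal (g (t, x + t * v))) ^ (2 : ℝ) :=
          setLIntegral_mono' measurableSet_Icc fun v hv =>
            ENNReal.rpow_le_rpow (step1 v hv) (by norm_num)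
      _ ≤ ∫⁻ v : ℝ, (∫⁻ t : ℝ, ENNReal.ofReal (g (t, x + t * v))) ^ (2 : ℝ) :=
          setLIntegral_le_lintegral _ _
  -- assemble
  rw [eq_top_iff]
  calc (⊤ : ℝ≥0∞) = ENNReal.ofReal L * ⊤ := by
        rw [ENNReal.mul_top (ENNReal.ofReal_pos.2 hL).ne']
    _ = ENNReal.ofReal L * ∫⁻ x in Set.Iic (y₀ - M), ENNReal.ofReal ((y₀ - x)⁻¹) := by
        rw [lint_shift_inv y₀ M hM0]
    _ = ∫⁻ x in Set.Iic (y₀ - M), ENNReal.ofReal L * ENNReal.ofReal ((y₀ - x)⁻¹) :=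
        (lintegral_const_mul' _ _ ENNReal.ofReal_ne_top).symm
    _ ≤ ∫⁻ x in Set.Iic (y₀ - M),
          ∫⁻ v : ℝ, (∫⁻ t : ℝ, ENNReal.ofReal (g (t, x + t * v))) ^ (2 : ℝ) :=
        setLIntegral_mono' measurableSet_Iic fun x hx => main x hx
    _ ≤ ∫⁻ x : ℝ, ∫⁻ v : ℝ, (∫⁻ t : ℝ, ENNReal.ofReal (g (t, x + t * v))) ^ (2 : ℝ) :=
        setLIntegral_le_lintegral _ _

/-- flipping time leaves the quantity unchanged -/
lemma flip_lemma (g : ℝ × ℝ → ℝ) :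
    (∫⁻ x : ℝ, ∫⁻ v : ℝ, (∫⁻ t : ℝ, ENNReal.ofReal (g (-t, x + t * v))) ^ (2 : ℝ))
      = ∫⁻ x : ℝ, ∫⁻ v : ℝ, (∫⁻ t : ℝ, ENNReal.ofReal (g (t, x + t * v))) ^ (2 : ℝ) := by
  refine lintegral_congr fun x => ?_
  have hinner : ∀ v : ℝ, (∫⁻ t : ℝ, ENNReal.ofReal (g (-t, x + t * v)))
      = ∫⁻ s : ℝ, ENNReal.ofReal (g (s, x + s * (-v))) := by
    intro v
    have h := lintegral_comp_neg (fun s => ENNReal.ofReal (g (s, x + s * (-v))))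
    rw [← h]
    exact lintegral_congr fun t => by rw [neg_mul_neg]
  calc (∫⁻ v : ℝ, (∫⁻ t : ℝ, ENNReal.ofReal (g (-t, x + t * v))) ^ (2 : ℝ))
      = ∫⁻ v : ℝ, (∫⁻ s : ℝ, ENNReal.ofReal (g (s, x + s * (-v)))) ^ (2 : ℝ) :=
        lintegral_congr fun v => by rw [hinner v]
    _ = ∫⁻ v : ℝ, (∫⁻ s : ℝ, ENNReal.ofReal (g (s, x + s * v))) ^ (2 : ℝ) :=
        lintegral_comp_neg (fun v => (∫⁻ s : ℝ, ENNReal.ofReal (g (s, x + s * v))) ^ (2 : ℝ))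

/-- From continuity and a positive value, get a positivity square avoiding `t = 0`. -/
lemma exists_square (g : ℝ × ℝ → ℝ) (hg : Continuous g) {z₀ : ℝ × ℝ} (h0 : 0 < g z₀) :
    ∃ a b c η y₀ : ℝ, 0 < c ∧ 0 < η ∧ a < b ∧ (0 < a ∨ b < 0) ∧
      ∀ t y, t ∈ Set.Icc a b → |y - y₀| ≤ η → c ≤ g (t, y) := by
  obtain ⟨δ, hδ, hδ'⟩ := Metric.continuousAt_iff.1 (hg.continuousAt (x := z₀))
    (g z₀ / 2) (by linarith)
  have hmem : ∀ t y : ℝ, |t - z₀.1| ≤ δ / 2 → |y - z₀.2| ≤ δ / 2 → g z₀ / 2 ≤ g (t, y) := by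
    intro t y ht hy
    have hd : dist (t, y) z₀ < δ := by
      rw [Prod.dist_eq]
      simp only [Real.dist_eq]
      apply lt_of_le_of_lt (max_le ht hy)
      linarith
    have h2 := hδ' hd
    rw [Real.dist_eq, abs_lt] at h2
    linarith [h2.1]
  rcases le_or_gt 0 z₀.1 with h | h
  · refine ⟨z₀.1 + δ / 4, z₀.1 + δ / 2, g z₀ / 2, δ / 2, z₀.2, by linarith, by linarith,
      by linarith, Or.inl (by linarith), ?_⟩
    intro t y ht hy
    exact hmem t y (abs_le.2 ⟨by linarith [ht.1], by linarith [ht.2]⟩) hy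
  · refine ⟨z₀.1 - δ / 2, z₀.1 - δ / 4, g z₀ / 2, δ / 2, z₀.2, by linarith, by linarith,
      by linarith, Or.inr (by linarith), ?_⟩
    intro t y ht hy
    exact hmem t y (abs_le.2 ⟨by linarith [ht.1], by linarith [ht.2]⟩) hy

/-- the divergence for an arbitrary nonzero nonnegative continuous function -/
lemma divergence_of_pos (g : ℝ × ℝ → ℝ) (hg : Continuous g) (hpos : ∀ z, 0 ≤ g z)
    {z₀ : ℝ × ℝ} (h0 : 0 < g z₀) :
    (∫⁻ x : ℝ, ∫⁻ v : ℝ, (∫⁻ t : ℝ, ENNReal.ofReal (g (t, x + t * v))) ^ (2 : ℝ)) = ∞ := by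
  obtain ⟨a, b, c, η, y₀, hc, hη, hab, hsign, hge⟩ := exists_square g hg h0
  rcases hsign with ha | hb
  · exact key_lemma g hpos a b c η y₀ ha hab hc hη hge
  · rw [← flip_lemma g]
    exact key_lemma (fun z => g (-z.1, z.2)) (fun z => hpos _) (-b) (-a) c η y₀
      (by linarith) (by linarith) hc hη
      (fun t y ht hy => hge (-t) y ⟨by linarith [ht.2], by linarith [ht.1]⟩ hy)


noncomputable def myBump : ContDiffBump (0 : ℝ) := ⟨1, 2, one_pos, one_lt_two⟩

lemma myBump_zero {t : ℝ} (ht : 2 ≤ |t|) : myBump t = 0 := by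
  apply ContDiffBump.zero_of_le_dist
  rw [Real.dist_eq, sub_zero]
  exact ht

lemma myBump_one {t : ℝ} (ht : |t| ≤ 1) : myBump t = 1 := by
  apply ContDiffBump.one_of_mem_closedBall
  rw [Metric.mem_closedBall, Real.dist_eq, sub_zero]
  exact ht

noncomputable def gWitness : SchwartzMap (ℝ × ℝ) ℝ where
  toFun := fun z => myBump z.1 * myBump z.2
  smooth' := (myBump.contDiff.comp contDiff_fst).mul (myBump.contDiff.comp contDiff_snd)
  decay' := by
    intro k n
    have hsupp : HasCompactSupport fun z : ℝ × ℝ => myBump z.1 * myBump z.2 := by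
      apply HasCompactSupport.intro
        (isCompact_Icc.prod isCompact_Icc :
          IsCompact (Set.Icc (-2 : ℝ) 2 ×ˢ Set.Icc (-2 : ℝ) 2))
      intro z hz
      rw [Set.mem_prod] at hz
      push_neg at hz
      by_cases h1 : z.1 ∈ Set.Icc (-2 : ℝ) 2
      · have h2 := hz h1
        rw [Set.mem_Icc, not_and_or, not_le, not_le] at h2
        have : myBump z.2 = 0 := myBump_zero (by
          rw [le_abs]; rcases h2 with h | h
          exacts [Or.inr (by linarith), Or.inl h.le])
        simp [this]
      · rw [Set.mem_Icc, not_and_or, not_le, not_le] at h1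
        have : myBump z.1 = 0 := myBump_zero (by
          rw [le_abs]; rcases h1 with h | h
          exacts [Or.inr (by linarith), Or.inl h.le])
        simp [this]
    have hsmooth : ContDiff ℝ ((⊤ : ℕ∞) : WithTop ℕ∞) fun z : ℝ × ℝ => myBump z.1 * myBump z.2 :=
      (myBump.contDiff.comp contDiff_fst).mul (myBump.contDiff.comp contDiff_snd)
    have hcont : Continuous fun z : ℝ × ℝ =>
        ‖z‖ ^ k * ‖iteratedFDeriv ℝ n (fun z : ℝ × ℝ => myBump z.1 * myBump z.2) z‖ := by
      refine ((continuous_norm.pow k).mul ?_)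
      exact (hsmooth.continuous_iteratedFDeriv (by exact_mod_cast le_top)).norm
    have hsupp2 : HasCompactSupport fun z : ℝ × ℝ =>
        ‖z‖ ^ k * ‖iteratedFDeriv ℝ n (fun z : ℝ × ℝ => myBump z.1 * myBump z.2) z‖ :=
      ((hsupp.iteratedFDeriv n).norm).mul_left
    obtain ⟨C, hC⟩ := hcont.bounded_above_of_compact_support hsupp2
    exact ⟨C, fun x => le_trans (Real.norm_eq_abs _ ▸ le_abs_self _) (hC x)⟩

lemma gWitness_apply (z : ℝ × ℝ) : gWitness z = myBump z.1 * myBump z.2 := rfl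

lemma gWitness_nonneg : ∀ z : ℝ × ℝ, 0 ≤ gWitness z := fun z =>
  mul_nonneg myBump.nonneg myBump.nonneg

lemma gWitness_le_one (z : ℝ × ℝ) : gWitness z ≤ 1 := by
  rw [gWitness_apply]
  nlinarith [myBump.le_one (x := z.1), myBump.le_one (x := z.2),
    myBump.nonneg (x := z.1), myBump.nonneg (x := z.2)]

lemma gWitness_zero {t y : ℝ} (h : 2 ≤ |t| ∨ 2 ≤ |y|) : gWitness (t, y) = 0 := by
  rw [gWitness_apply]
  rcases h with h | h
  · rw [myBump_zero h, zero_mul]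
  · rw [myBump_zero h, mul_zero]

lemma gWitness_one {t y : ℝ} (ht : |t| ≤ 1) (hy : |y| ≤ 1) : gWitness (t, y) = 1 := by
  rw [gWitness_apply]
  rw [myBump_one ht, myBump_one hy, mul_one]

lemma gWitness_integrable (x v : ℝ) :
    Integrable (fun t : ℝ => gWitness (t, x + t * v)) := by
  apply Continuous.integrable_of_hasCompactSupport
  · exact gWitness.continuous.comp (by fun_prop)
  · apply HasCompactSupport.intro (isCompact_Icc : IsCompact (Set.Icc (-2 : ℝ) 2))
    intro t ht
    rw [Set.mem_Icc, not_and_or, not_le, not_le] at ht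
    refine gWitness_zero (Or.inl ?_)
    rw [le_abs]
    rcases ht with h | h
    exacts [Or.inr (by linarith), Or.inl h.le]

lemma gWitness_transfer (x v : ℝ) :
    ENNReal.ofReal |∫ t : ℝ, gWitness (t, x + t * v)|
      = ∫⁻ t : ℝ, ENNReal.ofReal (gWitness (t, x + t * v)) := by
  rw [abs_of_nonneg (integral_nonneg fun t => gWitness_nonneg _)]
  exact ofReal_integral_eq_lintegral_ofReal (gWitness_integrable x v)
    (ae_of_all _ fun t => gWitness_nonneg _)

lemma gWitness_diverge :
    (∫⁻ x : ℝ, ∫⁻ v : ℝ, (∫⁻ t : ℝ, ENNReal.ofReal (gWitness (t, x + t * v))) ^ (2 : ℝ))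
      = ∞ := by
  refine key_lemma (⇑gWitness) gWitness_nonneg (1/2) 1 1 1 0 (by norm_num) (by norm_num)
    one_pos one_pos ?_
  intro t y ht hy
  rw [sub_zero] at hy
  rw [gWitness_one (abs_le.2 ⟨by linarith [ht.1], ht.2⟩) hy]

lemma gWitness_rhs_fin :
    (∫⁻ t : ℝ, (∫⁻ x : ℝ, ENNReal.ofReal |gWitness (t, x)|) ^ (2 : ℝ)) < ⊤ := by
  have claim1 : ∀ t : ℝ, (∫⁻ x : ℝ, ENNReal.ofReal |gWitness (t, x)|) ≤ 4 := by
    intro t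
    calc (∫⁻ x : ℝ, ENNReal.ofReal |gWitness (t, x)|)
        ≤ ∫⁻ x : ℝ, (Set.Icc (-2 : ℝ) 2).indicator (fun _ => (1 : ℝ≥0∞)) x := by
          refine lintegral_mono fun x => ?_
          by_cases hx : x ∈ Set.Icc (-2 : ℝ) 2
          · rw [Set.indicator_of_mem hx]
            refine ENNReal.ofReal_le_one.2 ?_
            rw [abs_of_nonneg (gWitness_nonneg _)]
            exact gWitness_le_one _
          · rw [Set.indicator_of_notMem hx]
            have h2 : gWitness (t, x) = 0 := by
              refine gWitness_zero (Or.inr ?_)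
              rw [Set.mem_Icc, not_and_or, not_le, not_le] at hx
              rw [le_abs]
              rcases hx with h | h
              exacts [Or.inr (by linarith), Or.inl h.le]
            rw [h2]
            simp
      _ = volume (Set.Icc (-2 : ℝ) 2) := by
          rw [lintegral_indicator measurableSet_Icc, setLIntegral_one]
      _ ≤ 4 := by
          rw [Real.volume_Icc]
          norm_num
  have claim2 : ∀ t : ℝ, 2 ≤ |t| → (∫⁻ x : ℝ, ENNReal.ofReal |gWitness (t, x)|) = 0 := by
    intro t ht
    have h : ∀ x : ℝ, ENNReal.ofReal |gWitness (t, x)| = 0 := fun x => by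
      rw [gWitness_zero (Or.inl ht)]; simp
    rw [lintegral_congr h, lintegral_zero]
  have h4 : ((4 : ℝ≥0∞)) ^ (2 : ℝ) = 16 := by
    rw [show (2 : ℝ) = ((2 : ℕ) : ℝ) by norm_num, ENNReal.rpow_natCast]
    norm_num
  calc (∫⁻ t : ℝ, (∫⁻ x : ℝ, ENNReal.ofReal |gWitness (t, x)|) ^ (2 : ℝ))
      ≤ ∫⁻ t : ℝ, (Set.Icc (-2 : ℝ) 2).indicator (fun _ => (16 : ℝ≥0∞)) t := by
        refine lintegral_mono fun t => ?_
        by_cases ht : t ∈ Set.Icc (-2 : ℝ) 2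
        · rw [Set.indicator_of_mem ht, ← h4]
          exact ENNReal.rpow_le_rpow (claim1 t) (by norm_num)
        · rw [Set.indicator_of_notMem ht]
          have h2 : 2 ≤ |t| := by
            rw [Set.mem_Icc, not_and_or, not_le, not_le] at ht
            rw [le_abs]
            rcases ht with h | h
            exacts [Or.inr (by linarith), Or.inl h.le]
          rw [claim2 t h2, ENNReal.zero_rpow_of_pos (by norm_num)]
    _ = 16 * volume (Set.Icc (-2 : ℝ) 2) := by
        rw [lintegral_indicator measurableSet_Icc, setLIntegral_const]
    _ < ⊤ := by
        rw [Real.volume_Icc]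
        exact ENNReal.mul_lt_top (by norm_num) ENNReal.ofReal_lt_top

/-- for `d = 1`: (i) `∫_0^ε r^{−1} dr = ∞` for every `ε > 0`; (ii) for any
nonzero nonnegative Schwartz `g` on `ℝ × ℝ` with nonnegative `ĝ ∈ C_c^∞`, the squared
norm `‖ρ*g‖_{L^2_{x,v}}^2` is infinite; hence (iii) the estimate
`‖ρ*g‖_{L^2_{x,v}} ≤ C ‖g‖_{L^2_t L^1_x}` fails. -/
theorem one_dimensional_endpoint_failure :
    (∀ ε : ℝ, 0 < ε → (∫⁻ r in Set.Ioc (0 : ℝ) ε, (ENNReal.ofReal r)⁻¹) = ∞)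
    ∧ (∀ g : SchwartzMap (ℝ × ℝ) ℝ, g ≠ 0 → (∀ z, 0 ≤ g z) →
        (∀ p, (spaceTimeFourier (⇑g) p).im = 0) →
        (∀ p, 0 ≤ (spaceTimeFourier (⇑g) p).re) →
        HasCompactSupport (spaceTimeFourier (⇑g)) →
        ContDiff ℝ (⊤ : ℕ∞) (spaceTimeFourier (⇑g)) →
        (∫⁻ x : ℝ, ∫⁻ v : ℝ,
            (∫⁻ t : ℝ, ENNReal.ofReal (g (t, x + t * v))) ^ (2 : ℝ)) = ∞)
    ∧ ¬ ∃ C : ℝ, ∀ g : SchwartzMap (ℝ × ℝ) ℝ,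
          (∫⁻ x : ℝ, ∫⁻ v : ℝ,
              ENNReal.ofReal |∫ t : ℝ, g (t, x + t * v)| ^ (2 : ℝ)) ^ (1 / 2 : ℝ)
            ≤ ENNReal.ofReal C *
                (∫⁻ t : ℝ, (∫⁻ x : ℝ, ENNReal.ofReal |g (t, x)|) ^ (2 : ℝ)) ^ (1 / 2 : ℝ) := by
  refine ⟨fun ε hε => lint_Ioc_inv_top hε, ?_, ?_⟩
  · intro g hne hpos _ _ _ _
    have hz : ∃ z, g z ≠ 0 := by
      by_contra hz
      push_neg at hz
      exact hne (DFunLike.ext _ _ fun z => by simpa using hz z)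
    obtain ⟨z₀, hz₀⟩ := hz
    exact divergence_of_pos (⇑g) g.continuous hpos ((hpos z₀).lt_of_ne (Ne.symm hz₀))
  · rintro ⟨C, hC⟩
    have h := hC gWitness
    have hLHS : (∫⁻ x : ℝ, ∫⁻ v : ℝ,
        ENNReal.ofReal |∫ t : ℝ, gWitness (t, x + t * v)| ^ (2 : ℝ)) = ⊤ := by
      have hcongr : (∫⁻ x : ℝ, ∫⁻ v : ℝ,
          ENNReal.ofReal |∫ t : ℝ, gWitness (t, x + t * v)| ^ (2 : ℝ))
          = ∫⁻ x : ℝ, ∫⁻ v : ℝ,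
              (∫⁻ t : ℝ, ENNReal.ofReal (gWitness (t, x + t * v))) ^ (2 : ℝ) :=
        lintegral_congr fun x => lintegral_congr fun v => by rw [gWitness_transfer x v]
      rw [hcongr]
      exact gWitness_diverge
    rw [hLHS, ENNReal.top_rpow_of_pos (by norm_num)] at h
    exact ENNReal.mul_ne_top ENNReal.ofReal_ne_top
      (ENNReal.rpow_ne_top_of_nonneg (by norm_num) gWitness_rhs_fin.ne) (top_le_iff.1 h)
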